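/- Let n > e⁶ and 1 ≤ δ ≤ 2 be real, and define f(t) = √(n(2 log t − δ)) on [√n, n]. Then: (i) f maps [√n, n] into (√n, n); (ii) f is increasing with f'(t) ≤ 1/2; (iii) the equation t = f(t) has a unique root R in (√n, n), and R < f(t) < t for R < t ≤ n while t < f(t) < R for √n ≤ t < R. -/

import Mathlib

/-!
On `[√n, n]` we have `log t ≥ (log n) / 2 > 3`, hence `2 log t - δ > 4` and
`f' t = √n / (t √(2 log t - δ)) < √n / (2t) ≤ 1/2`. So `f` is increasing and `f t - t` is strictly
decreasing. At the ends, `f √n > √n` because `2 log t - δ > 1`, and `f n < n` because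
`2 log n - δ < 4 (√n - 1) ≤ n` (from `log x ≤ x - 1` at `x = √n`). The intermediate value theorem then
gives the unique zero `R` of `f t - t`, and the signs of `f t - t` and `f t - f R` on either side of
`R` give the two sandwiches.
-/

open Real Set

noncomputable def fIter (n δ t : ℝ) : ℝ := Real.sqrt (n * (2 * Real.log t - δ))

section FixedPoint

variable {f : ℝ → ℝ}

theorem strictAntiOn_sub_id_of_hasDerivAt_lt_one {D : Set ℝ} (hD : Convex ℝ D) {f' : ℝ → ℝ}
    (hf : ∀ x ∈ D, HasDerivAt f (f' x) x) (hf' : ∀ x ∈ interior D, f' x < 1) :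
    StrictAntiOn (fun x => f x - x) D :=
  strictAntiOn_of_hasDerivWithinAt_neg hD
    (fun x hx => ((hf x hx).sub (hasDerivAt_id x)).continuousAt.continuousWithinAt)
    (fun x hx => ((hf x (interior_subset hx)).sub (hasDerivAt_id x)).hasDerivWithinAt)
    (fun x hx => sub_neg.mpr (hf' x hx))

theorem existsUnique_fixed_mem_Ioo {a b : ℝ} (hab : a ≤ b) (hf : ContinuousOn f (Icc a b))
    (ha : a < f a) (hb : f b < b) (hanti : StrictAntiOn (fun x => f x - x) (Icc a b)) :
    ∃! R, R ∈ Ioo a b ∧ f R = R := by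
  have hzero : (0 : ℝ) ∈ Ioo (f b - b) (f a - a) := ⟨by linarith, by linarith⟩
  obtain ⟨R, hR, hR0⟩ := intermediate_value_Ioo' hab (hf.sub continuousOn_id) hzero
  refine ⟨R, ⟨hR, by linarith [show f R - R = 0 from hR0]⟩, ?_⟩
  rintro y ⟨hy, hfy⟩
  refine hanti.injOn (Ioo_subset_Icc_self hy) (Ioo_subset_Icc_self hR) ?_
  simp only [hfy, sub_self]
  linarith [show f R - R = 0 from hR0]

theorem fixed_sandwich {s : Set ℝ} {R t : ℝ} (hmono : StrictMonoOn f s)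
    (hanti : StrictAntiOn (fun x => f x - x) s) (hR : R ∈ s) (hfix : f R = R) (ht : t ∈ s) :
    (R < t → R < f t ∧ f t < t) ∧ (t < R → t < f t ∧ f t < R) := by
  refine ⟨fun hRt => ⟨hfix ▸ hmono hR ht hRt, ?_⟩, fun htR => ⟨?_, hfix ▸ hmono ht hR htR⟩⟩
  · linarith [hanti hR ht hRt]
  · linarith [hanti ht hR htR]

end FixedPoint

section FIter

variable {n δ t : ℝ}

theorem four_lt_two_mul_log_sub (hn : exp 6 < n) (hδ : δ ≤ 2) (ht : √n ≤ t) :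
    4 < 2 * log t - δ := by
  have hn0 : 0 < n := (exp_pos 6).trans hn
  have hlogn : 6 < log n := by simpa using log_lt_log (exp_pos 6) hn
  have hlogt : log n / 2 ≤ log t := log_sqrt hn0.le ▸ log_le_log (sqrt_pos.mpr hn0) ht
  linarith

theorem hasDerivAt_fIter (hn : 0 < n) (ht : 0 < t) (hpos : 0 < 2 * log t - δ) :
    HasDerivAt (fIter n δ) (√n / (t * √(2 * log t - δ))) t := by
  have hinner : HasDerivAt (fun t => n * (2 * log t - δ)) (n * (2 * t⁻¹)) t :=
    (((hasDerivAt_log ht.ne').const_mul 2).sub_const δ).const_mul n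
  refine (hinner.sqrt (mul_pos hn hpos).ne').congr_deriv ?_
  have hsn : √n ^ 2 = n := sq_sqrt hn.le
  have hsx : 0 < √(2 * log t - δ) := sqrt_pos.mpr hpos
  rw [sqrt_mul hn.le]
  field_simp
  rw [hsn]

theorem sqrt_div_mul_sqrt_le_half (ht : √n ≤ t) (h4 : 4 ≤ 2 * log t - δ) :
    √n / (t * √(2 * log t - δ)) ≤ 1 / 2 := by
  have hsx : 2 ≤ √(2 * log t - δ) := by
    simpa using sqrt_le_sqrt (show (2 : ℝ) ^ 2 ≤ 2 * log t - δ by linarith)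
  have ht0 : 0 ≤ t := (sqrt_nonneg n).trans ht
  apply div_le_of_le_mul₀ (by positivity) (by norm_num)
  nlinarith

theorem sqrt_lt_fIter (hn : 0 < n) (h : 1 < 2 * log t - δ) : √n < fIter n δ t :=
  sqrt_lt_sqrt hn.le (by nlinarith)

theorem fIter_lt (hn : 0 < n) (hδ : 0 < δ) (ht0 : 0 < t) (ht : t ≤ n) : fIter n δ t < n := by
  rw [fIter, sqrt_lt' hn]
  have hlogt : log t ≤ log n := log_le_log ht0 ht
  have hlogn : log n ≤ 2 * (√n - 1) := by
    have := log_le_sub_one_of_pos (sqrt_pos.mpr hn)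
    rw [log_sqrt hn.le] at this
    linarith
  have hsn : √n ^ 2 = n := sq_sqrt hn.le
  nlinarith [sq_nonneg (√n - 2)]

end FIter

theorem stmt17 (n δ : ℝ) (hn : Real.exp 6 < n) (hδ1 : 1 ≤ δ) (hδ2 : δ ≤ 2) :
    (∀ t ∈ Set.Icc (Real.sqrt n) n, fIter n δ t ∈ Set.Ioo (Real.sqrt n) n) ∧
    StrictMonoOn (fIter n δ) (Set.Icc (Real.sqrt n) n) ∧
    (∀ t ∈ Set.Icc (Real.sqrt n) n,
      HasDerivAt (fIter n δ) (Real.sqrt n / (t * Real.sqrt (2 * Real.log t - δ))) t ∧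
      Real.sqrt n / (t * Real.sqrt (2 * Real.log t - δ)) ≤ 1 / 2) ∧
    (∃! R : ℝ, R ∈ Set.Ioo (Real.sqrt n) n ∧ fIter n δ R = R) ∧
    (∀ R ∈ Set.Ioo (Real.sqrt n) n, fIter n δ R = R →
      (∀ t : ℝ, R < t → t ≤ n → R < fIter n δ t ∧ fIter n δ t < t) ∧
      (∀ t : ℝ, Real.sqrt n ≤ t → t < R → t < fIter n δ t ∧ fIter n δ t < R)) := by
  have hn0 : 0 < n := (exp_pos 6).trans hn
  have hsn : √n < n := sqrt_lt_self_iff.mpr (by linarith [add_one_le_exp (6 : ℝ)])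
  have hpos : ∀ t ∈ Icc √n n, 0 < t := fun t ht => (sqrt_pos.mpr hn0).trans_le ht.1
  have hlog : ∀ t ∈ Icc √n n, 4 < 2 * log t - δ := fun t ht => four_lt_two_mul_log_sub hn hδ2 ht.1
  have hmem : ∀ t ∈ Icc √n n, fIter n δ t ∈ Ioo √n n := fun t ht =>
    ⟨sqrt_lt_fIter hn0 (by linarith [hlog t ht]), fIter_lt hn0 (by linarith) (hpos t ht) ht.2⟩
  have hderiv : ∀ t ∈ Icc √n n, HasDerivAt (fIter n δ) (√n / (t * √(2 * log t - δ))) t :=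
    fun t ht => hasDerivAt_fIter hn0 (hpos t ht) (by linarith [hlog t ht])
  have hhalf : ∀ t ∈ Icc √n n, √n / (t * √(2 * log t - δ)) ≤ 1 / 2 :=
    fun t ht => sqrt_div_mul_sqrt_le_half ht.1 (hlog t ht).le
  have hcont : ContinuousOn (fIter n δ) (Icc √n n) :=
    fun t ht => (hderiv t ht).continuousAt.continuousWithinAt
  have hmono : StrictMonoOn (fIter n δ) (Icc √n n) :=
    strictMonoOn_of_hasDerivWithinAt_pos (convex_Icc _ _) hcont
      (fun t ht => (hderiv t (interior_subset ht)).hasDerivWithinAt)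
      (fun t ht => have ht' := interior_subset ht
        div_pos (sqrt_pos.mpr hn0) (mul_pos (hpos t ht') (sqrt_pos.mpr (by linarith [hlog t ht']))))
  have hanti : StrictAntiOn (fun t => fIter n δ t - t) (Icc √n n) :=
    strictAntiOn_sub_id_of_hasDerivAt_lt_one (convex_Icc _ _) hderiv
      (fun t ht => (hhalf t (interior_subset ht)).trans_lt (by norm_num))
  refine ⟨hmem, hmono, fun t ht => ⟨hderiv t ht, hhalf t ht⟩,
    existsUnique_fixed_mem_Ioo hsn.le hcont (hmem _ (left_mem_Icc.mpr hsn.le)).1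
      (hmem _ (right_mem_Icc.mpr hsn.le)).2 hanti, fun R hR hfix => ⟨?_, ?_⟩⟩
  · exact fun t hRt htn =>
      (fixed_sandwich hmono hanti (Ioo_subset_Icc_self hR) hfix ⟨hR.1.le.trans hRt.le, htn⟩).1 hRt
  · exact fun t hst htR =>
      (fixed_sandwich hmono hanti (Ioo_subset_Icc_self hR) hfix ⟨hst, htR.le.trans hR.2.le⟩).2 htR
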